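/- Under an optimal reward redistribution, the expected sum of delayed rewards vanishes for every interval: κ(m, t−1) = 0 for all 1 ≤ t ≤ T and 0 ≤ m ≤ T − t. In particular, E_π[R_{t+1+τ} | s_{t−1}, a_{t−1}] = 0 for all 0 ≤ τ ≤ T − t − 1. -/

import Mathlib

open Finset

/-- Conditional expectation of `f` given the event `E` under the (finitely supported)
probability weights `μ`. -/
noncomputable def cexp {Ω : Type*} [Fintype Ω] (μ f : Ω → ℝ) (E : Ω → Prop)
    [DecidablePred E] : ℝ :=
  (∑ ω ∈ Finset.univ.filter E, μ ω * f ω) / (∑ ω ∈ Finset.univ.filter E, μ ω)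

/-- The predecessor time index, with `pd 0 = 0` serving as the formal pair
`(s₋₁, a₋₁)`. -/
def pd {T : ℕ} (t : Fin (T + 1)) : Fin (T + 1) :=
  ⟨t.1 - 1, lt_of_le_of_lt (Nat.sub_le _ _) t.isLt⟩

/-!
Optimality makes the expected redistributed reward at time `u` equal to the difference
`q̃(u) - q̃(u-1)` of the conditional expectations of the final reward given the state-action
pair at `u` and at `u - 1`. By the Markov property of the trajectory distribution, conditioning
on the pair at a later time and then on an earlier pair at `s` is the same as conditioning on
the pair at `s` directly (tower property). So for `s < u` both terms have the same conditional
expectation given the pair at `s`, every delayed reward has conditional mean zero, and so does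
every sum `κ` of them.
-/

section Splice

variable {ι X : Type*} [LinearOrder ι]

def splice (u : ι) (ω ω' : ι → X) : ι → X := fun i => if i ≤ u then ω i else ω' i

variable {u i j : ι} {ω ω' : ι → X}

theorem splice_of_le (hi : i ≤ u) : splice u ω ω' i = ω i := if_pos hi

theorem splice_of_ge (h : ω u = ω' u) (hi : u ≤ i) : splice u ω ω' i = ω' i := by
  rcases hi.eq_or_lt with rfl | hi
  · rw [splice_of_le le_rfl, h]
  · exact if_neg hi.not_ge

theorem splice_splice (h : ω u = ω' u) : splice u (splice u ω ω') (splice u ω' ω) = ω := by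
  funext i
  rcases le_total i u with hi | hi
  · rw [splice_of_le hi, splice_of_le hi]
  · rw [splice_of_ge (by rw [splice_of_le le_rfl, splice_of_le le_rfl, h]) hi,
      splice_of_ge h.symm hi]

theorem splice_mul_splice {M : Type*} [CommMonoid M] (φ : X → X → M) (h : ω u = ω' u)
    (hij : i ≤ j) (hu : j ≤ u ∨ u ≤ i) :
    φ (splice u ω ω' i) (splice u ω ω' j) * φ (splice u ω' ω i) (splice u ω' ω j)
      = φ (ω i) (ω j) * φ (ω' i) (ω' j) := by
  rcases hu with hj | hi
  · simp only [splice_of_le hj, splice_of_le (hij.trans hj)]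
  · simp only [splice_of_ge h hi, splice_of_ge h (hi.trans hij), splice_of_ge h.symm hi,
      splice_of_ge h.symm (hi.trans hij)]
    exact mul_comm _ _

/-- Exchanging the futures of two paths that meet at time `u` preserves the product of their
weights. For a nonnegative weight this is the Markov property at `u`: past and future are
conditionally independent given the present. -/
def IsMarkovAt {M : Type*} [Mul M] (u : ι) (μ : (ι → X) → M) : Prop :=
  ∀ ω ω' : ι → X, ω u = ω' u → μ (splice u ω ω') * μ (splice u ω' ω) = μ ω * μ ω'

end Splice

def pathWeight {X M : Type*} [CommMonoid M] {n : ℕ} (p0 : X → M) (p : Fin n → X → X → M)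
    (ω : Fin (n + 1) → X) : M :=
  p0 (ω 0) * ∏ t, p t (ω t.castSucc) (ω t.succ)

theorem isMarkovAt_pathWeight {X M : Type*} [CommMonoid M] {n : ℕ} (p0 : X → M)
    (p : Fin n → X → X → M) (u : Fin (n + 1)) : IsMarkovAt u (pathWeight p0 p) := by
  intro ω ω' h
  simp only [pathWeight]
  rw [mul_mul_mul_comm, ← prod_mul_distrib, mul_mul_mul_comm _ (∏ t, _), ← prod_mul_distrib,
    splice_of_le (Fin.zero_le u), splice_of_le (Fin.zero_le u)]
  congr 1
  refine prod_congr rfl fun t _ => splice_mul_splice (p t) h t.castSucc_lt_succ.le ?_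
  exact (le_or_gt t.succ u).imp_right Fin.le_castSucc_iff.mpr

section Markov

variable {ι X : Type*} [LinearOrder ι] [Fintype ι] [DecidableEq ι] [Fintype X] [DecidableEq X]
  {μ : (ι → X) → ℝ} {s u v : ι}

theorem IsMarkovAt.condIndep (hμ : IsMarkovAt u μ) (hsu : s ≤ u) (huv : u ≤ v) (g : X → ℝ)
    (x z : X) :
    (∑ ω with ω s = x ∧ ω u = z, μ ω * g (ω v)) * ∑ ω with ω u = z, μ ω
      = (∑ ω with ω s = x ∧ ω u = z, μ ω) * ∑ ω with ω u = z, μ ω * g (ω v) := by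
  rw [sum_mul_sum, sum_mul_sum, ← sum_product', ← sum_product']
  set pairs := ({ω | ω s = x ∧ ω u = z} : Finset (ι → X)) ×ˢ ({ω | ω u = z} : Finset (ι → X))
  set exchange : (ι → X) × (ι → X) → (ι → X) × (ι → X) :=
    fun ωω => (splice u ωω.1 ωω.2, splice u ωω.2 ωω.1)
  have hmem {ω ω' : ι → X} : (ω, ω') ∈ pairs ↔ (ω s = x ∧ ω u = z) ∧ ω' u = z := by
    simp only [pairs, mem_product, mem_filter, mem_univ, true_and]
  have hmeet {ω ω' : ι → X} (hωω : (ω, ω') ∈ pairs) : ω u = ω' u :=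
    (hmem.mp hωω).1.2.trans (hmem.mp hωω).2.symm
  have hex : ∀ ωω ∈ pairs, exchange ωω ∈ pairs := by
    rintro ⟨ω, ω'⟩ hωω
    simpa only [exchange, hmem, splice_of_le hsu, splice_of_le le_rfl] using hmem.mp hωω
  have hinv : ∀ ωω ∈ pairs, exchange (exchange ωω) = ωω := by
    rintro ⟨ω, ω'⟩ hωω
    simp only [exchange, splice_splice (hmeet hωω), splice_splice (hmeet hωω).symm]
  -- exchanging the futures of a pair moves the factor `g` from the second path to the first
  refine sum_nbij' exchange exchange hex hex hinv hinv ?_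
  rintro ⟨ω, ω'⟩ hωω
  simp only [exchange, splice_of_ge (hmeet hωω).symm huv]
  rw [mul_right_comm, ← hμ ω ω' (hmeet hωω), mul_assoc]

theorem IsMarkovAt.cexp_mul_sum (hμ : IsMarkovAt u μ) (hμ0 : ∀ ω, 0 ≤ μ ω) (hsu : s ≤ u)
    (huv : u ≤ v) (g : X → ℝ) (x z : X) :
    cexp μ (fun ω => g (ω v)) (fun ω => ω u = z) * ∑ ω with ω s = x ∧ ω u = z, μ ω
      = ∑ ω with ω s = x ∧ ω u = z, μ ω * g (ω v) := by
  by_cases hz : ∑ ω with ω u = z, μ ω = 0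
  · have hnull : ∀ ω ∈ ({ω | ω s = x ∧ ω u = z} : Finset _), μ ω = 0 := fun ω hω =>
      (sum_eq_zero_iff_of_nonneg fun ω _ => hμ0 ω).mp hz ω
        (mem_filter.mpr ⟨mem_univ ω, (mem_filter.mp hω).2.2⟩)
    rw [sum_eq_zero hnull, mul_zero,
      sum_eq_zero fun ω hω => by rw [hnull ω hω, zero_mul]]
  · simp only [cexp]
    rw [div_mul_eq_mul_div, div_eq_iff hz, hμ.condIndep hsu huv g x z, mul_comm]

theorem IsMarkovAt.sum_mul_cexp (hμ : IsMarkovAt u μ) (hμ0 : ∀ ω, 0 ≤ μ ω) (hsu : s ≤ u)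
    (huv : u ≤ v) (g : X → ℝ) (x : X) :
    ∑ ω with ω s = x, μ ω * cexp μ (fun ω' => g (ω' v)) (fun ω' => ω' u = ω u)
      = ∑ ω with ω s = x, μ ω * g (ω v) := by
  rw [← sum_fiberwise _ (fun ω : ι → X => ω u), ← sum_fiberwise _ (fun ω : ι → X => ω u)]
  refine sum_congr rfl fun z _ => ?_
  simp only [filter_filter]
  rw [← hμ.cexp_mul_sum hμ0 hsu huv g x z, mul_sum]
  refine sum_congr rfl fun ω hω => ?_
  rw [(mem_filter.mp hω).2.2, mul_comm]

end Markov

/-- Under an optimal reward redistribution (expected redistributed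
reward equal to the `q̃^π`-differences), the expected sum of delayed rewards vanishes
for every interval: `κ(m, t-1) = 0` for all `1 ≤ t ≤ T` and `0 ≤ m ≤ T - t`.  In
particular `E_π[R_{t+1+τ} | s_{t-1}, a_{t-1}] = 0` for all `0 ≤ τ ≤ T - t - 1`. -/
theorem optimal_redistribution_kappa_zero
    {S A : Type*} [Fintype S] [Fintype A] [DecidableEq S] [DecidableEq A]
    (T : ℕ)
    -- Markov trajectory distribution of state-action pairs under the fixed policy π
    (μ : (Fin (T + 1) → S × A) → ℝ)
    (p0 : S × A → ℝ) (p : Fin T → S × A → S × A → ℝ)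
    (hμ : ∀ ω, μ ω = p0 (ω 0) * ∏ t : Fin T, p t (ω t.castSucc) (ω t.succ))
    (hμ0 : ∀ ω, 0 ≤ μ ω)
    -- expected delayed reward at sequence end, given the last state-action pair
    (rT : S × A → ℝ)
    -- `h t y x = E[R_{t+1} | (s_{t-1},a_{t-1}) = y, (s_t,a_t) = x]`
    (h : Fin (T + 1) → S × A → S × A → ℝ)
    -- q̃^π : action-value function of the delayed-reward MDP
    (q : Fin (T + 1) → S × A → ℝ)
    (hq : ∀ t x, q t x = cexp μ (fun ω => rT (ω (Fin.last T))) (fun ω => ω t = x))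
    -- optimality, in the equivalent form:  E[R_{t+1} | s_{t-1},a_{t-1},s_t,a_t] is the
    -- difference of consecutive q̃^π-values (with q̃^π(s₋₁,a₋₁) = 0)
    (hopt : ∀ (t : Fin (T + 1)) (y x : S × A),
      (∑ ω ∈ Finset.univ.filter (fun ω => ω (pd t) = y ∧ ω t = x), μ ω) ≠ 0 →
      h t y x = q t x - (if (t : ℕ) = 0 then 0 else q (pd t) y)) :
    -- κ(m, t-1) = 0 for all 1 ≤ t ≤ T and 0 ≤ m ≤ T - t
    (∀ t m : ℕ, ∀ (ht1 : 1 ≤ t) (ht2 : t ≤ T) (hm : m ≤ T - t), ∀ x : S × A,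
      (∑ ω ∈ Finset.univ.filter (fun ω => ω ⟨t - 1, by omega⟩ = x), μ ω) ≠ 0 →
      cexp μ
        (fun ω => ∑ τ : Fin (m + 1),
          h ⟨t + τ.1, by have := τ.2; omega⟩
            (ω (pd ⟨t + τ.1, by have := τ.2; omega⟩))
            (ω ⟨t + τ.1, by have := τ.2; omega⟩))
        (fun ω => ω ⟨t - 1, by omega⟩ = x) = 0) ∧
    -- in particular, each expected future reward vanishes:
    (∀ t τ : ℕ, ∀ (ht1 : 1 ≤ t) (ht2 : t ≤ T) (hτ : τ ≤ T - t), ∀ x : S × A,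
      (∑ ω ∈ Finset.univ.filter (fun ω => ω ⟨t - 1, by omega⟩ = x), μ ω) ≠ 0 →
      cexp μ
        (fun ω => h ⟨t + τ, by omega⟩ (ω (pd ⟨t + τ, by omega⟩)) (ω ⟨t + τ, by omega⟩))
        (fun ω => ω ⟨t - 1, by omega⟩ = x) = 0) := by
  have hmarkov (u : Fin (T + 1)) : IsMarkovAt u μ := by
    rw [show μ = pathWeight p0 p from funext hμ]
    exact isMarkovAt_pathWeight p0 p u
  have hstep (u : Fin (T + 1)) (hu : (u : ℕ) ≠ 0) (ω : Fin (T + 1) → S × A) :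
      μ ω * h u (ω (pd u)) (ω u) = μ ω * (q u (ω u) - q (pd u) (ω (pd u))) := by
    rcases (hμ0 ω).eq_or_lt with hω | hω
    · rw [← hω, zero_mul, zero_mul]
    · have hmass : ∑ ω' with ω' (pd u) = ω (pd u) ∧ ω' u = ω u, μ ω' ≠ 0 :=
        (sum_pos' (fun ω' _ => hμ0 ω') ⟨ω, by simp, hω⟩).ne'
      rw [hopt u _ _ hmass, if_neg hu]
  have hreward (s u : Fin (T + 1)) (hsu : s < u) (x : S × A) :
      ∑ ω with ω s = x, μ ω * h u (ω (pd u)) (ω u) = 0 := by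
    have hspd : s ≤ pd u := Fin.le_def.mpr (by simp only [pd]; omega)
    rw [sum_congr rfl fun ω _ => hstep u (by omega) ω]
    simp only [mul_sub, sum_sub_distrib, hq]
    rw [(hmarkov u).sum_mul_cexp hμ0 hsu.le (Fin.le_last u),
      (hmarkov (pd u)).sum_mul_cexp hμ0 hspd (Fin.le_last _), sub_self]
  refine ⟨fun t m ht1 ht2 hm x _ => ?_, fun t τ ht1 ht2 hτ x _ => ?_⟩
  · simp only [cexp, mul_sum]
    rw [sum_comm, sum_eq_zero fun τ _ => hreward _ _ (Fin.mk_lt_mk.mpr (by omega)) x, zero_div]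
  · rw [cexp, hreward _ _ (Fin.mk_lt_mk.mpr (by omega)) x, zero_div]
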